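/- Let 0 < q < 1, ρ ∈ (0,1], and define for complex z the function G(z) = ((1-q)(ρ + (1-ρ)z)/(1-qz)) · (1-qz²)/(1-z) · (ρ/(ρ + (1-ρ)z)) · (1/z) · E(z), where E(z) = exp((1-q)²·z·p·t/((1-z)(1-qz))). Then G satisfies the differential-form symmetry G(z) dz = G(1/(qz)) d(1/(qz)), i.e. G(z) = -G(1/(qz))/(q z²), wherever both sides are defined. -/
import Mathlib
set_option maxHeartbeats 1600000


noncomputable def Gfun (q p t ρ : ℝ) (z : ℂ) : ℂ :=
  ((1 - (q : ℂ)) * ((ρ : ℂ) + (1 - (ρ : ℂ)) * z) / (1 - (q : ℂ) * z)) *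
    ((1 - (q : ℂ) * z ^ 2) / (1 - z)) *
    ((ρ : ℂ) / ((ρ : ℂ) + (1 - (ρ : ℂ)) * z)) * (1 / z) *
    Complex.exp ((1 - (q : ℂ)) ^ 2 * z * (p : ℂ) * (t : ℂ) / ((1 - z) * (1 - (q : ℂ) * z)))

theorem stmt16 (q p t ρ : ℝ) (hq0 : 0 < q) (hq1 : q < 1)
    (hρ : ρ ∈ Set.Ioc (0 : ℝ) 1) (hp : 0 < p) (ht : 0 ≤ t)
    (z : ℂ) (hz0 : z ≠ 0) (hz1 : z ≠ 1) (hz2 : z ≠ 1 / (q : ℂ))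
    (hρ1 : (ρ : ℂ) + (1 - (ρ : ℂ)) * z ≠ 0)
    (hρ2 : (ρ : ℂ) + (1 - (ρ : ℂ)) * (1 / ((q : ℂ) * z)) ≠ 0) :
    Gfun q p t ρ z = -Gfun q p t ρ (1 / ((q : ℂ) * z)) / ((q : ℂ) * z ^ 2) := by
  have hqC : (q : ℂ) ≠ 0 := Complex.ofReal_ne_zero.2 hq0.ne'
  have hz1' : (1 : ℂ) - z ≠ 0 := sub_ne_zero.2 fun h => hz1 h.symm
  have hqz1 : (1 : ℂ) - q * z ≠ 0 := by
    intro h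
    apply hz2
    field_simp
    linear_combination -h
  have hqz0 : (q : ℂ) * z ≠ 0 := mul_ne_zero hqC hz0
  have hw1 : (1 : ℂ) - 1 / ((q : ℂ) * z) ≠ 0 := by
    rw [sub_ne_zero]
    intro h
    apply hqz1
    field_simp at h
    linear_combination -h
  have hw2 : (1 : ℂ) - q * (1 / ((q : ℂ) * z)) ≠ 0 := by
    rw [sub_ne_zero]
    intro h
    apply hz1
    field_simp at h
    linear_combination h
  have hE : Complex.exp ((1 - (q : ℂ)) ^ 2 * (1 / ((q : ℂ) * z)) * (p : ℂ) * (t : ℂ) /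
      ((1 - 1 / ((q : ℂ) * z)) * (1 - (q : ℂ) * (1 / ((q : ℂ) * z))))) =
      Complex.exp ((1 - (q : ℂ)) ^ 2 * z * (p : ℂ) * (t : ℂ) / ((1 - z) * (1 - (q : ℂ) * z))) := by
    congr 1
    rw [div_eq_div_iff (mul_ne_zero hw1 hw2) (mul_ne_zero hz1' hqz1)]
    field_simp
    ring
  have key : ∀ u : ℂ, u ≠ 0 → (1:ℂ) - u ≠ 0 → (1:ℂ) - q*u ≠ 0 → (ρ:ℂ)+(1-(ρ:ℂ))*u ≠ 0 →
      Gfun q p t ρ u = (1-(q:ℂ))*(ρ:ℂ)*((1 - q*u^2) / ((1-q*u)*(1-u)*u)) *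
        Complex.exp ((1 - (q : ℂ)) ^ 2 * u * (p : ℂ) * (t : ℂ) / ((1 - u) * (1 - (q : ℂ) * u))) := by
    intro u h0 h1 h2 h3
    unfold Gfun
    field_simp
  have hfrac : (1 - (q:ℂ) * (1 / ((q:ℂ) * z)) ^ 2) /
      ((1 - (q:ℂ) * (1 / ((q:ℂ) * z))) * (1 - 1 / ((q:ℂ) * z)) * (1 / ((q:ℂ) * z))) =
      ((q:ℂ) * z * ((q:ℂ) * z ^ 2 - 1)) / ((1 - z) * (1 - (q:ℂ) * z)) := by
    rw [div_eq_div_iff (mul_ne_zero (mul_ne_zero hw2 hw1) (div_ne_zero one_ne_zero hqz0))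
      (mul_ne_zero hz1' hqz1)]
    field_simp
    ring
  rw [key z hz0 hz1' hqz1 hρ1,
    key (1 / ((q:ℂ) * z)) (div_ne_zero one_ne_zero hqz0) hw1 hw2 hρ2, hE, hfrac]
  generalize Complex.exp ((1 - (q : ℂ)) ^ 2 * z * (p : ℂ) * (t : ℂ) /
    ((1 - z) * (1 - (q : ℂ) * z))) = E
  rw [neg_div, eq_comm, neg_eq_iff_eq_neg, div_eq_iff (mul_ne_zero hqC (pow_ne_zero 2 hz0))]
  field_simp
  ring
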